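/- arXiv:2604.07207 — 2 statements merged into one kernel-verified Lean document; each statement's English description precedes it below -/
import Mathlib

section
/- Define y_n := I(n)/n − (1−α)/(1+α), γ_n := (1+α)/(n+1), β_1 := 1 and β_n := ∏_{k=1}^{n−1}(1 − γ_k) for n ≥ 2, and ε_{j+1} := (1/(1+α))·( I(j+1) − I(j) − (1−α) + α·I(j)/j ) for j ≥ 1. Then for every n ≥ 1, y_n = β_n·( y_1 + ∑_{j=1}^{n−1} (γ_j/β_{j+1})·ε_{j+1} ), and (ε_{j+1})_{j≥1} is a martingale difference sequence with respect to the filtration generated by the forests, i.e., 𝔼[ε_{j+1} | 𝔽_j] = 0 almost surely for every j ≥ 1. -/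
/-!
The decomposition is algebra: by the definition of `ε`, `y_{n+1} = (1 - γ_n) y_n + γ_n ε_{n+1}`,
and this linear recursion unrolls by variation of constants.

For the martingale property, adding vertex `j + 1` changes `I` by `+1` if `ξ_{j+1} = 0`, and by
`-1` exactly when `ξ_{j+1} = 1` and `u_{j+1}` is isolated in `𝔽_j`. On an atom of the first `j`
steps the forest `𝔽_j` is fixed, while `ξ_{j+1} ~ Bernoulli(α)` and `u_{j+1} ~ Unif{1, …, j}` are
independent of it; splitting the atom according to `(ξ_{j+1}, u_{j+1})`, on each piece of which
`ε_{j+1}` is constant, gives `𝔼[I(j+1) - I(j)] = (1 - α) - α I(j) / j` there.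
-/

open MeasureTheory Finset

/-- `IsForestRoot ξ u root` : `root k ω` is the label of the root of the connected component
of vertex `k` in the percolated random recursive forest built from `(ξ, u)`:
`root 1 = 1` and, for `k ≥ 2`, `root k = root (u k)` if the edge `{k, u k}` is retained
(`ξ k = 1`), while `root k = k` if it is deleted. -/
def IsForestRoot {Ω : Type} (ξ : ℕ → Ω → Bool) (u : ℕ → Ω → ℕ)
    (root : ℕ → Ω → ℕ) : Prop :=
  (∀ ω, root 1 ω = 1) ∧
  ∀ ω, ∀ k, 2 ≤ k → root k ω = if ξ k ω = true then root (u k ω) ω else k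

/-- `ForestLaw P α ξ u` : under the probability measure `P`, the `(ξ_k)_{k≥2}` are i.i.d.
Bernoulli(α), the `(u_k)_{k≥2}` are independent with `u_k` uniform on `{1,…,k−1}`, and all
these random variables are jointly independent; this is expressed by the finite-dimensional
product formula, together with measurability of the random variables. -/
def ForestLaw {Ω : Type} [MeasurableSpace Ω] (P : Measure Ω) (α : ℝ)
    (ξ : ℕ → Ω → Bool) (u : ℕ → Ω → ℕ) : Prop :=
  (∀ k b, MeasurableSet {ω | ξ k ω = b}) ∧
  (∀ k j, MeasurableSet {ω | u k ω = j}) ∧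
  ∀ n : ℕ, 2 ≤ n → ∀ (a : ℕ → Bool) (b : ℕ → ℕ),
    (P {ω | ∀ k, 2 ≤ k → k ≤ n → (ξ k ω = a k ∧ u k ω = b k)}).toReal =
      ∏ k ∈ Finset.Icc 2 n,
        ((if a k = true then α else 1 - α) *
          (if 1 ≤ b k ∧ b k ≤ k - 1 then 1 / ((k : ℝ) - 1) else 0))

/-- `clusterSize root n j ω = |𝒞_{j,n}|`, the size of the cluster of the forest `𝔽_n`
rooted at `j` (equal to `0` if no cluster is rooted at `j`). -/
def clusterSize {Ω : Type} (root : ℕ → Ω → ℕ) (n j : ℕ) (ω : Ω) : ℕ :=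
  ((Finset.Icc 1 n).filter fun k => root k ω = j).card

/-- `clusterCount root k n ω = N_k(n)`, the number of clusters of size `k` in `𝔽_n`.
In particular `clusterCount root 1 n ω = I(n)` is the number of isolated vertices. -/
def clusterCount {Ω : Type} (root : ℕ → Ω → ℕ) (k n : ℕ) (ω : Ω) : ℕ :=
  ((Finset.Icc 1 n).filter fun j => clusterSize root n j ω = k).card

/-- `y_n = I(n)/n − (1−α)/(1+α)`, where `I(n) = N₁(n)` is the number of isolated vertices. -/
noncomputable def yLevel {Ω : Type} (α : ℝ) (root : ℕ → Ω → ℕ) (n : ℕ) (ω : Ω) : ℝ :=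
  (clusterCount root 1 n ω : ℝ) / n - (1 - α) / (1 + α)

/-- `γ_n = (1+α)/(n+1)`. -/
noncomputable def gammaCoef (α : ℝ) (n : ℕ) : ℝ := (1 + α) / (n + 1)

/-- `β_1 = 1` and `β_n = ∏_{k=1}^{n−1} (1 − γ_k)` for `n ≥ 2`. -/
noncomputable def betaProd (α : ℝ) (n : ℕ) : ℝ :=
  ∏ k ∈ Finset.Icc 1 (n - 1), (1 - gammaCoef α k)

/-- `ε_{j+1} = (1/(1+α))·(I(j+1) − I(j) − (1−α) + α·I(j)/j)`. -/
noncomputable def epsMDS {Ω : Type} (α : ℝ) (root : ℕ → Ω → ℕ) (j : ℕ) (ω : Ω) : ℝ :=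
  (1 / (1 + α)) *
    ((clusterCount root 1 (j + 1) ω : ℝ) - (clusterCount root 1 j ω : ℝ) - (1 - α) +
      α * (clusterCount root 1 j ω : ℝ) / j)

theorem eq_mul_add_sum_of_linear_recurrence {K : Type*} [Field K] {x g e β : ℕ → K}
    (hβ1 : β 1 = 1) (hβ : ∀ n, 1 ≤ n → β (n + 1) = β n * (1 - g n))
    (hβ0 : ∀ n, 1 ≤ n → β n ≠ 0) (hx : ∀ n, 1 ≤ n → x (n + 1) = (1 - g n) * x n + g n * e n)
    (n : ℕ) (hn : 1 ≤ n) :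
    x n = β n * (x 1 + ∑ j ∈ Icc 1 (n - 1), g j / β (j + 1) * e j) := by
  induction n, hn using Nat.le_induction with
  | base => simp [hβ1]
  | succ n hn ih =>
    obtain ⟨p, rfl⟩ : ∃ p, n = p + 1 := ⟨n - 1, by omega⟩
    have hstep : β (p + 1 + 1) * (g (p + 1) / β (p + 1 + 1) * e (p + 1)) = g (p + 1) * e (p + 1) :=
      by field_simp [hβ0 (p + 1 + 1) (by omega)]
    rw [Nat.add_sub_cancel, sum_Icc_succ_top hn, ← add_assoc, mul_add _ _ (_ / _ * _), hstep,
      hx _ hn, ih, hβ _ hn, Nat.add_sub_cancel]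
    ring

theorem gammaCoef_lt_one {α : ℝ} (hα1 : α < 1) {n : ℕ} (hn : 1 ≤ n) : gammaCoef α n < 1 := by
  have : (1 : ℝ) ≤ n := by exact_mod_cast hn
  rw [gammaCoef, div_lt_one (by positivity)]
  linarith

theorem betaProd_pos {α : ℝ} (hα1 : α < 1) (n : ℕ) : 0 < betaProd α n :=
  prod_pos fun _ hk => sub_pos.2 (gammaCoef_lt_one hα1 (mem_Icc.1 hk).1)

theorem betaProd_one (α : ℝ) : betaProd α 1 = 1 := by simp [betaProd]

theorem betaProd_succ (α : ℝ) {n : ℕ} (hn : 1 ≤ n) :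
    betaProd α (n + 1) = betaProd α n * (1 - gammaCoef α n) := by
  obtain ⟨p, rfl⟩ : ∃ p, n = p + 1 := ⟨n - 1, by omega⟩
  simp only [betaProd, Nat.add_sub_cancel, prod_Icc_succ_top hn]

theorem yLevel_succ {Ω : Type} {α : ℝ} (hα : 1 + α ≠ 0) (root : ℕ → Ω → ℕ) {n : ℕ} (hn : 1 ≤ n)
    (ω : Ω) :
    yLevel α root (n + 1) ω =
      (1 - gammaCoef α n) * yLevel α root n ω + gammaCoef α n * epsMDS α root n ω := by
  have : (n : ℝ) ≠ 0 := by positivity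
  simp only [yLevel, gammaCoef, epsMDS]
  push_cast
  field_simp
  ring

theorem yLevel_eq_betaProd_mul {Ω : Type} {α : ℝ} (hα0 : 0 ≤ α) (hα1 : α < 1)
    (root : ℕ → Ω → ℕ) (ω : Ω) (n : ℕ) (hn : 1 ≤ n) :
    yLevel α root n ω =
      betaProd α n * (yLevel α root 1 ω +
        ∑ j ∈ Icc 1 (n - 1), gammaCoef α j / betaProd α (j + 1) * epsMDS α root j ω) :=
  eq_mul_add_sum_of_linear_recurrence (x := (yLevel α root · ω)) (e := (epsMDS α root · ω))
    (betaProd_one α) (fun _ => betaProd_succ α)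
    (fun n _ => (betaProd_pos hα1 n).ne') (fun _ hn => yLevel_succ (by linarith) root hn ω) n hn

section Forest

variable {Ω : Type} {ξ : ℕ → Ω → Bool} {u : ℕ → Ω → ℕ} {root : ℕ → Ω → ℕ} {n : ℕ} {ω : Ω}

def ValidParents (u : ℕ → Ω → ℕ) (n : ℕ) (ω : Ω) : Prop :=
  ∀ k, 2 ≤ k → k ≤ n → 1 ≤ u k ω ∧ u k ω ≤ k - 1

def IsRootLabelling (root : ℕ → Ω → ℕ) (n : ℕ) (ω : Ω) : Prop :=
  ∀ k, 1 ≤ k → k ≤ n → 1 ≤ root k ω ∧ root k ω ≤ k ∧ root (root k ω) ω = root k ω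

theorem IsForestRoot.isRootLabelling (hroot : IsForestRoot ξ u root) (hv : ValidParents u n ω) :
    IsRootLabelling root n ω := by
  intro k
  induction k using Nat.strong_induction_on with
  | _ k ih =>
    intro hk1 hkn
    obtain rfl | hk2 : k = 1 ∨ 2 ≤ k := by omega
    · simp [hroot.1 ω]
    obtain ⟨hu1, hu2⟩ := hv k hk2 hkn
    rw [hroot.2 ω k hk2]
    split_ifs
    · have := ih (u k ω) (by omega) hu1 (by omega)
      exact ⟨this.1, by omega, this.2.2⟩
    · exact ⟨by omega, le_rfl, by rw [hroot.2 ω k hk2, if_neg ‹_›]⟩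

theorem IsForestRoot.root_congr (hroot : IsForestRoot ξ u root) (hv : ValidParents u n ω)
    {ω' : Ω} (hagree : ∀ k, 2 ≤ k → k ≤ n → ξ k ω' = ξ k ω ∧ u k ω' = u k ω) :
    ∀ k, 1 ≤ k → k ≤ n → root k ω' = root k ω := by
  intro k
  induction k using Nat.strong_induction_on with
  | _ k ih =>
    intro hk1 hkn
    obtain rfl | hk2 : k = 1 ∨ 2 ≤ k := by omega
    · rw [hroot.1, hroot.1]
    obtain ⟨hu1, hu2⟩ := hv k hk2 hkn
    rw [hroot.2 ω k hk2, hroot.2 ω' k hk2, (hagree k hk2 hkn).1, (hagree k hk2 hkn).2]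
    split_ifs
    · exact ih (u k ω) (by omega) hu1 (by omega)
    · rfl

theorem clusterSize_congr {ω' : Ω} (h : ∀ k, 1 ≤ k → k ≤ n → root k ω' = root k ω) (i : ℕ) :
    clusterSize root n i ω' = clusterSize root n i ω := by
  unfold clusterSize
  congr 1
  refine filter_congr fun k hk => ?_
  rw [h k (mem_Icc.1 hk).1 (mem_Icc.1 hk).2]

theorem clusterCount_congr {ω' : Ω} (h : ∀ k, 1 ≤ k → k ≤ n → root k ω' = root k ω) (s : ℕ) :
    clusterCount root s n ω' = clusterCount root s n ω := by
  simp only [clusterCount, clusterSize_congr h]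

theorem clusterSize_succ (root : ℕ → Ω → ℕ) (n i : ℕ) (ω : Ω) :
    clusterSize root (n + 1) i ω =
      clusterSize root n i ω + if root (n + 1) ω = i then 1 else 0 := by
  simp only [clusterSize, card_filter, sum_Icc_succ_top (Nat.le_add_left 1 n)]

theorem clusterCount_eq_sum (root : ℕ → Ω → ℕ) (n : ℕ) (ω : Ω) :
    clusterCount root 1 n ω = ∑ i ∈ Icc 1 n, if clusterSize root n i ω = 1 then 1 else 0 :=
  card_filter _ _

theorem IsRootLabelling.clusterSize_eq_zero_of_lt (hr : IsRootLabelling root n ω) {i : ℕ}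
    (hi : n < i) : clusterSize root n i ω = 0 := by
  refine card_eq_zero.2 (filter_eq_empty_iff.2 fun k hk => ?_)
  have := (hr k (mem_Icc.1 hk).1 (mem_Icc.1 hk).2).2.1
  have := (mem_Icc.1 hk).2
  omega

theorem IsRootLabelling.one_le_clusterSize_root (hr : IsRootLabelling root n ω) {l : ℕ}
    (hl1 : 1 ≤ l) (hln : l ≤ n) : 1 ≤ clusterSize root n (root l ω) ω := by
  obtain ⟨h1, hle, hidem⟩ := hr l hl1 hln
  exact card_pos.2 ⟨root l ω, mem_filter.2 ⟨mem_Icc.2 ⟨h1, by omega⟩, hidem⟩⟩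

/-- A non-root is the root of no cluster, and shares the cluster of its root. -/
theorem IsRootLabelling.clusterSize_root_eq_one_iff (hr : IsRootLabelling root n ω) {l : ℕ}
    (hl1 : 1 ≤ l) (hln : l ≤ n) :
    clusterSize root n (root l ω) ω = 1 ↔ clusterSize root n l ω = 1 := by
  obtain ⟨h1, hle, hidem⟩ := hr l hl1 hln
  by_cases hself : root l ω = l
  · rw [hself]
  have hzero : clusterSize root n l ω = 0 := by
    refine card_eq_zero.2 (filter_eq_empty_iff.2 fun k hk hkl => hself ?_)
    rw [← hkl, (hr k (mem_Icc.1 hk).1 (mem_Icc.1 hk).2).2.2]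
  have htwo : 2 ≤ clusterSize root n (root l ω) ω :=
    one_lt_card.2 ⟨root l ω, mem_filter.2 ⟨mem_Icc.2 ⟨h1, by omega⟩, hidem⟩,
      l, mem_filter.2 ⟨mem_Icc.2 ⟨hl1, hln⟩, rfl⟩, hself⟩
  omega

theorem IsRootLabelling.clusterCount_succ_of_root_self (hr : IsRootLabelling root n ω)
    (hnew : root (n + 1) ω = n + 1) :
    clusterCount root 1 (n + 1) ω = clusterCount root 1 n ω + 1 := by
  have htop : clusterSize root (n + 1) (n + 1) ω = 1 := by
    rw [clusterSize_succ, if_pos hnew, hr.clusterSize_eq_zero_of_lt (by omega)]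
  rw [clusterCount_eq_sum, clusterCount_eq_sum, sum_Icc_succ_top (by omega), htop, if_pos rfl]
  refine congrArg (· + 1) (sum_congr rfl fun i hi => ?_)
  have hne : n + 1 ≠ i := by have := (mem_Icc.1 hi).2; omega
  rw [clusterSize_succ, hnew, if_neg hne, add_zero]

theorem IsRootLabelling.clusterCount_succ_of_root_eq (hr : IsRootLabelling root n ω) {ρ : ℕ}
    (hρ1 : 1 ≤ ρ) (hρn : ρ ≤ n) (hρ : 1 ≤ clusterSize root n ρ ω) (hjoin : root (n + 1) ω = ρ) :
    clusterCount root 1 (n + 1) ω + (if clusterSize root n ρ ω = 1 then 1 else 0) =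
      clusterCount root 1 n ω := by
  have hpoint : ∀ i ∈ Icc 1 n,
      (if clusterSize root (n + 1) i ω = 1 then 1 else 0) +
          (if ρ = i then if clusterSize root n ρ ω = 1 then 1 else 0 else 0) =
        if clusterSize root n i ω = 1 then 1 else 0 := by
    intro i _
    rw [clusterSize_succ, hjoin]
    by_cases hi : ρ = i
    · subst hi; split_ifs <;> omega
    · simp [hi]
  have htop : clusterSize root (n + 1) (n + 1) ω = 0 := by
    rw [clusterSize_succ, hjoin, hr.clusterSize_eq_zero_of_lt (by omega), if_neg (by omega)]
  rw [clusterCount_eq_sum, clusterCount_eq_sum, sum_Icc_succ_top (by omega), htop,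
    if_neg (by omega), add_zero, ← sum_congr rfl hpoint,
    sum_add_distrib, sum_ite_eq, if_pos (mem_Icc.2 ⟨hρ1, hρn⟩)]

theorem IsForestRoot.clusterCount_succ (hroot : IsForestRoot ξ u root) (hn : 1 ≤ n)
    (hv : ValidParents u (n + 1) ω) :
    (clusterCount root 1 (n + 1) ω : ℝ) = clusterCount root 1 n ω +
      if ξ (n + 1) ω = true then -(if clusterSize root n (u (n + 1) ω) ω = 1 then 1 else 0)
      else 1 := by
  have hr : IsRootLabelling root n ω :=
    hroot.isRootLabelling fun k hk2 hkn => hv k hk2 (by omega)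
  obtain ⟨hu1, hun⟩ := hv (n + 1) (by omega) le_rfl
  rw [Nat.add_sub_cancel] at hun
  have hstep := hroot.2 ω (n + 1) (by omega)
  by_cases hξ : ξ (n + 1) ω = true
  · rw [if_pos hξ] at hstep ⊢
    have h := hr.clusterCount_succ_of_root_eq (hr (u (n + 1) ω) hu1 hun).1
      ((hr (u (n + 1) ω) hu1 hun).2.1.trans hun) (hr.one_le_clusterSize_root hu1 hun) hstep
    simp only [hr.clusterSize_root_eq_one_iff hu1 hun] at h
    rw [← h]
    split_ifs <;> push_cast <;> ring
  · rw [if_neg hξ] at hstep ⊢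
    rw [hr.clusterCount_succ_of_root_self hstep]
    push_cast
    ring

theorem IsForestRoot.epsMDS_eq (hroot : IsForestRoot ξ u root) (α : ℝ) {j : ℕ} (hj : 1 ≤ j)
    (hv : ValidParents u (j + 1) ω) {ω₀ : Ω}
    (hagree : ∀ k, 2 ≤ k → k ≤ j → ξ k ω₀ = ξ k ω ∧ u k ω₀ = u k ω) :
    epsMDS α root j ω = 1 / (1 + α) *
      ((if ξ (j + 1) ω = true then -(if clusterSize root j (u (j + 1) ω) ω₀ = 1 then 1 else 0)
        else 1) - (1 - α) + α * clusterCount root 1 j ω₀ / j) := by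
  have hroots := hroot.root_congr (fun k hk hkj => hv k hk (by omega)) hagree
  rw [epsMDS, hroot.clusterCount_succ hj hv, clusterCount_congr hroots, clusterSize_congr hroots]
  ring

end Forest

theorem setIntegral_biUnion_finset_of_eqOn_const {X ι : Type*} [MeasurableSpace X]
    {μ : Measure X} [IsFiniteMeasure μ] (t : Finset ι) {s : ι → Set X}
    (hs : ∀ i ∈ t, MeasurableSet (s i)) (hd : (t : Set ι).PairwiseDisjoint s) {f : X → ℝ}
    {v : ι → ℝ} (hf : ∀ i ∈ t, Set.EqOn f (fun _ => v i) (s i)) :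
    ∫ x in ⋃ i ∈ t, s i, f x ∂μ = ∑ i ∈ t, v i * μ.real (s i) := by
  rw [integral_biUnion_finset t hs hd fun i hi =>
    IntegrableOn.congr_fun integrableOn_const (hf i hi).symm (hs i hi)]
  refine sum_congr rfl fun i hi => ?_
  rw [setIntegral_congr_fun (hs i hi) (hf i hi), setIntegral_const, smul_eq_mul, mul_comm]

section Law

variable {Ω : Type} {ξ : ℕ → Ω → Bool} {u : ℕ → Ω → ℕ} {j k n : ℕ}

def forestCylinder (ξ : ℕ → Ω → Bool) (u : ℕ → Ω → ℕ) (n : ℕ) (a : ℕ → Bool) (b : ℕ → ℕ) : Set Ω :=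
  {ω | ∀ k, 2 ≤ k → k ≤ n → ξ k ω = a k ∧ u k ω = b k}

/-- `P(ξ_k = c, u_k = l)` under `ForestLaw`. -/
noncomputable def stepWeight (α : ℝ) (c : Bool) (l k : ℕ) : ℝ :=
  (if c = true then α else 1 - α) * (if 1 ≤ l ∧ l ≤ k - 1 then 1 / ((k : ℝ) - 1) else 0)

theorem stepWeight_succ {α : ℝ} {l : ℕ} (hl1 : 1 ≤ l) (hlj : l ≤ j) (c : Bool) :
    stepWeight α c l (j + 1) = (if c = true then α else 1 - α) / j := by
  rw [stepWeight, Nat.add_sub_cancel, if_pos (show 1 ≤ l ∧ l ≤ j from ⟨hl1, hlj⟩)]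
  push_cast
  ring

/-- Given `𝔽_j`, the increment `I(j+1) - I(j)` has mean `(1 - α) - α I(j) / j`. -/
theorem sum_increment_mul_stepWeight_eq_zero {α : ℝ} (hj : 1 ≤ j) {s : ℕ → ℝ} {m : ℝ}
    (hs : ∑ l ∈ Icc 1 j, s l = m) (W : ℝ) :
    ∑ c, ∑ l ∈ Icc 1 j, 1 / (1 + α) * ((if c = true then -s l else 1) - (1 - α) + α * m / j) *
      (W * stepWeight α c l (j + 1)) = 0 := by
  have hterm : ∀ c, ∀ l ∈ Icc 1 j,
      1 / (1 + α) * ((if c = true then -s l else 1) - (1 - α) + α * m / j) *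
        (W * stepWeight α c l (j + 1)) =
      W / (1 + α) / j * if c = true then α * (-s l - (1 - α) + α * m / j)
        else (1 - α) * (α + α * m / j) := by
    intro c l hl
    rw [stepWeight_succ (mem_Icc.1 hl).1 (mem_Icc.1 hl).2]
    cases c <;> simp only [if_true, Bool.false_eq_true, if_false] <;> ring
  have hsum : ∑ l ∈ Icc 1 j, α * (-s l - (1 - α) + α * m / j) +
      ∑ l ∈ Icc 1 j, (1 - α) * (α + α * m / j) = 0 := by
    have : (j : ℝ) ≠ 0 := by positivity
    simp only [← mul_sum, sum_add_distrib, sum_sub_distrib, sum_neg_distrib, hs, sum_const,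
      Nat.card_Icc, Nat.add_sub_cancel, nsmul_eq_mul]
    field_simp
    ring
  rw [Fintype.sum_bool, sum_congr rfl (hterm true), sum_congr rfl (hterm false), ← mul_sum,
    ← mul_sum, ← mul_add]
  simpa only [if_true, Bool.false_eq_true, if_false, hsum] using mul_zero _

theorem forestCylinder_succ (hj : 1 ≤ j) (a : ℕ → Bool) (b : ℕ → ℕ) (c : Bool) (l : ℕ) :
    forestCylinder ξ u (j + 1) (Function.update a (j + 1) c) (Function.update b (j + 1) l) =
      forestCylinder ξ u j a b ∩ {ω | ξ (j + 1) ω = c ∧ u (j + 1) ω = l} := by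
  ext ω
  simp only [forestCylinder, Set.mem_inter_iff, Set.mem_ofPred_eq]
  constructor
  · intro h
    refine ⟨fun k hk hkj => ?_, by simpa using h (j + 1) (by omega) le_rfl⟩
    simpa [Function.update_of_ne (show k ≠ j + 1 by omega)] using h k hk (by omega)
  · rintro ⟨h, hc, hl⟩ k hk hkj
    obtain hkj | rfl : k ≤ j ∨ k = j + 1 := by omega
    · simpa [Function.update_of_ne (show k ≠ j + 1 by omega)] using h k hk hkj
    · simp [hc, hl]

namespace ForestLaw

variable [MeasurableSpace Ω] {P : Measure Ω} {α : ℝ} (hlaw : ForestLaw P α ξ u)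
include hlaw

theorem measurableSet_forestCylinder (n : ℕ) (a : ℕ → Bool) (b : ℕ → ℕ) :
    MeasurableSet (forestCylinder ξ u n a b) := by
  have : forestCylinder ξ u n a b =
      ⋂ k, ⋂ (_ : 2 ≤ k), ⋂ (_ : k ≤ n), {ω | ξ k ω = a k} ∩ {ω | u k ω = b k} := by
    ext
    simp [forestCylinder]
  rw [this]
  exact .iInter fun k => .iInter fun _ => .iInter fun _ => (hlaw.1 k _).inter (hlaw.2.1 k _)

theorem measureReal_forestCylinder (hn : 2 ≤ n) (a : ℕ → Bool) (b : ℕ → ℕ) :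
    P.real (forestCylinder ξ u n a b) = ∏ k ∈ Icc 2 n, stepWeight α (a k) (b k) k :=
  hlaw.2.2 n hn a b

theorem measure_forestCylinder_eq_zero [IsFiniteMeasure P] {a : ℕ → Bool} {b : ℕ → ℕ} (hk : 2 ≤ k)
    (hkn : k ≤ n) (hb : ¬(1 ≤ b k ∧ b k ≤ k - 1)) : P (forestCylinder ξ u n a b) = 0 := by
  rw [← measureReal_eq_zero_iff, hlaw.measureReal_forestCylinder (hk.trans hkn)]
  exact prod_eq_zero (mem_Icc.2 ⟨hk, hkn⟩) (by simp [stepWeight, hb])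

theorem measure_invalid_parent_eq_zero [IsFiniteMeasure P] (hk : 2 ≤ k) :
    P {ω | ¬(1 ≤ u k ω ∧ u k ω ≤ k - 1)} = 0 := by
  let a (g : Fin (k + 1) → Bool × ℕ) (i : ℕ) : Bool := (g (Fin.ofNat (k + 1) i)).1
  let b (g : Fin (k + 1) → Bool × ℕ) (i : ℕ) : ℕ := (g (Fin.ofNat (k + 1) i)).2
  refine measure_mono_null (t := ⋃ g, forestCylinder ξ u k (a g) (b g) ∩
    {ω | ¬(1 ≤ u k ω ∧ u k ω ≤ k - 1)}) (fun ω hω => ?_) (measure_iUnion_null fun g => ?_)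
  · refine Set.mem_iUnion.2 ⟨fun i => (ξ i ω, u i ω), fun i _ hi => ?_, hω⟩
    simp [a, b, Nat.mod_eq_of_lt (Nat.lt_succ_of_le hi)]
  by_cases hg : 1 ≤ b g k ∧ b g k ≤ k - 1
  · refine measure_mono_null (fun ω ⟨hcyl, hbad⟩ => hbad ?_) measure_empty
    rwa [(hcyl k hk le_rfl).2]
  · exact measure_mono_null Set.inter_subset_left (hlaw.measure_forestCylinder_eq_zero hk le_rfl hg)

theorem validParents_of_mem_forestCylinder [IsFiniteMeasure P] {a : ℕ → Bool} {b : ℕ → ℕ} {ω : Ω}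
    (hA : P (forestCylinder ξ u n a b) ≠ 0) (hω : ω ∈ forestCylinder ξ u n a b) :
    ValidParents u n ω := by
  intro k hk hkn
  rw [(hω k hk hkn).2]
  by_contra hb
  exact hA (hlaw.measure_forestCylinder_eq_zero hk hkn hb)

theorem measureReal_forestCylinder_inter (hj : 1 ≤ j) (a : ℕ → Bool) (b : ℕ → ℕ) (c : Bool)
    (l : ℕ) :
    P.real (forestCylinder ξ u j a b ∩ {ω | ξ (j + 1) ω = c ∧ u (j + 1) ω = l}) =
      (∏ k ∈ Icc 2 j, stepWeight α (a k) (b k) k) * stepWeight α c l (j + 1) := by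
  rw [← forestCylinder_succ hj, hlaw.measureReal_forestCylinder (by omega),
    prod_Icc_succ_top (by omega)]
  simp only [Function.update_self]
  congr 1
  refine prod_congr rfl fun k hk => ?_
  have : k ≠ j + 1 := by have := (mem_Icc.1 hk).2; omega
  rw [Function.update_of_ne this, Function.update_of_ne this]

theorem setIntegral_forestCylinder_eq_sum [IsFiniteMeasure P] (hj : 1 ≤ j) (a : ℕ → Bool)
    (b : ℕ → ℕ) {f : Ω → ℝ} {v : Bool → ℕ → ℝ}
    (hf : ∀ c l, 1 ≤ l → l ≤ j → Set.EqOn f (fun _ => v c l)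
      (forestCylinder ξ u j a b ∩ {ω | ξ (j + 1) ω = c ∧ u (j + 1) ω = l})) :
    ∫ ω in forestCylinder ξ u j a b, f ω ∂P = ∑ c, ∑ l ∈ Icc 1 j,
      v c l * P.real (forestCylinder ξ u j a b ∩ {ω | ξ (j + 1) ω = c ∧ u (j + 1) ω = l}) := by
  let piece (p : Bool × ℕ) : Set Ω :=
    forestCylinder ξ u j a b ∩ {ω | ξ (j + 1) ω = p.1 ∧ u (j + 1) ω = p.2}
  have hcover : forestCylinder ξ u j a b =ᵐ[P] ⋃ p ∈ univ ×ˢ Icc 1 j, piece p := by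
    refine ae_eq_set.2 ⟨measure_mono_null ?_
      (hlaw.measure_invalid_parent_eq_zero (k := j + 1) (by omega)), ?_⟩
    · rintro ω ⟨hω, hnot⟩ hvalid
      refine hnot (Set.mem_iUnion₂.2 ⟨(ξ (j + 1) ω, u (j + 1) ω), ?_, hω, rfl, rfl⟩)
      simp only [mem_product, mem_univ, mem_Icc, true_and]
      omega
    · rw [Set.sdiff_eq_empty.2 (Set.iUnion₂_subset fun p _ => Set.inter_subset_left),
        measure_empty]
  have hmeas : ∀ p ∈ univ ×ˢ Icc 1 j, MeasurableSet (piece p) := fun p _ => by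
    simpa only [forestCylinder_succ hj] using hlaw.measurableSet_forestCylinder (j + 1)
      (Function.update a (j + 1) p.1) (Function.update b (j + 1) p.2)
  have hdisj : ((univ ×ˢ Icc 1 j : Finset (Bool × ℕ)) : Set (Bool × ℕ)).PairwiseDisjoint piece :=
    fun p _ q _ hpq => Set.disjoint_left.2 fun ω hp hq =>
      hpq (Prod.ext (hp.2.1.symm.trans hq.2.1) (hp.2.2.symm.trans hq.2.2))
  rw [setIntegral_congr_set hcover, setIntegral_biUnion_finset_of_eqOn_const _ hmeas hdisj
    (v := fun p => v p.1 p.2) fun p hp => hf p.1 p.2 (mem_Icc.1 (mem_product.1 hp).2).1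
      (mem_Icc.1 (mem_product.1 hp).2).2, sum_product]

end ForestLaw

end Law

theorem IsForestRoot.setIntegral_forestCylinder_epsMDS {Ω : Type} [MeasurableSpace Ω]
    {P : Measure Ω} [IsFiniteMeasure P] {α : ℝ} {ξ : ℕ → Ω → Bool} {u root : ℕ → Ω → ℕ}
    (hroot : IsForestRoot ξ u root) (hlaw : ForestLaw P α ξ u) {j : ℕ} (hj : 1 ≤ j)
    (a : ℕ → Bool) (b : ℕ → ℕ) :
    ∫ ω in forestCylinder ξ u j a b, epsMDS α root j ω ∂P = 0 := by
  by_cases hA : P (forestCylinder ξ u j a b) = 0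
  · exact setIntegral_measure_zero _ hA
  obtain ⟨ω₀, hω₀⟩ := nonempty_of_measure_ne_zero hA
  set s : ℕ → ℝ := fun l => if clusterSize root j l ω₀ = 1 then 1 else 0
  have hs : ∑ l ∈ Icc 1 j, s l = clusterCount root 1 j ω₀ := by
    simp only [s, sum_boole, clusterCount]
  rw [hlaw.setIntegral_forestCylinder_eq_sum hj a b (v := fun c l => 1 / (1 + α) *
    ((if c = true then -s l else 1) - (1 - α) + α * clusterCount root 1 j ω₀ / j))]
  · simp only [hlaw.measureReal_forestCylinder_inter hj]
    exact sum_increment_mul_stepWeight_eq_zero hj hs _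
  · rintro c l hl1 hlj ω ⟨hω, rfl, rfl⟩
    have hv : ValidParents u (j + 1) ω := fun k hk hkj => by
      obtain hkj | rfl : k ≤ j ∨ k = j + 1 := by omega
      · exact hlaw.validParents_of_mem_forestCylinder hA hω k hk hkj
      · exact ⟨hl1, by omega⟩
    exact hroot.epsMDS_eq α hj hv fun k hk hkj =>
      ⟨(hω₀ k hk hkj).1.trans (hω k hk hkj).1.symm, (hω₀ k hk hkj).2.trans (hω k hk hkj).2.symm⟩

/-- The martingale-difference property `𝔼[ε_{j+1} | 𝔽_j] = 0` is stated on the atoms of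
`σ(ξ_k, u_k : k ≤ j)`, a refinement of `𝔽_j`. -/
theorem isolated_count_martingale_decomposition
    (α : ℝ) (hα0 : 0 ≤ α) (hα1 : α < 1)
    {Ω : Type} [MeasurableSpace Ω] (P : Measure Ω) [IsProbabilityMeasure P]
    (ξ : ℕ → Ω → Bool) (u : ℕ → Ω → ℕ) (root : ℕ → Ω → ℕ)
    (hlaw : ForestLaw P α ξ u) (hroot : IsForestRoot ξ u root) :
    (∀ ω : Ω, ∀ n : ℕ, 1 ≤ n →
      yLevel α root n ω =
        betaProd α n *
          (yLevel α root 1 ω +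
            ∑ j ∈ Finset.Icc 1 (n - 1),
              gammaCoef α j / betaProd α (j + 1) * epsMDS α root j ω)) ∧
    (∀ j : ℕ, 1 ≤ j → ∀ (a : ℕ → Bool) (b : ℕ → ℕ),
      ∫ ω in {ω | ∀ k, 2 ≤ k → k ≤ j → (ξ k ω = a k ∧ u k ω = b k)},
        epsMDS α root j ω ∂P = 0) :=
  ⟨yLevel_eq_betaProd_mul hα0 hα1 root, fun _ hj a b =>
    hroot.setIntegral_forestCylinder_epsMDS hlaw hj a b⟩
end

section
/- For every α ∈ [0,1) and every n ≥ 2, ℙ( max_{⌊n/2⌋ ≤ k ≤ n} I(k)/k ≥ 3(1−α) ) ≤ 4·e^{−(1−α)n/12}. -/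
open MeasureTheory Finset

/-! A vertex `j ≥ 2` is the root of its cluster only if the edge to its parent was deleted
(`ξ_j = 0`), so `I(k) ≤ 1 + B` for every `k ≤ n`, where `B = #{2 ≤ j ≤ n : ξ_j = 0}` is
`Bin(n - 1, 1 - α)`. On the event, `B ≥ 3(1 - α)⌊n/2⌋ - 1`, and the exponential Chernoff bound
with parameter `1/2`, together with `√e ≤ 5/3`, gives the estimate. The parents `u_j` matter
only through the almost sure fact `u_j ∈ {1, …, j - 1}`, which makes the root recursion
well founded. -/

open Real

def bernoulliWeight (α : ℝ) (b : Bool) : ℝ := if b then α else 1 - α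

def parentsInRange {Ω : Type} (u : ℕ → Ω → ℕ) (n : ℕ) : Set Ω :=
  {ω | ∀ m ∈ Icc 2 n, u m ω ∈ Icc 1 (m - 1)}

def retentionPattern {Ω : Type} (ξ : ℕ → Ω → Bool) (n : ℕ) (a : Icc 2 n → Bool) : Set Ω :=
  {ω | ∀ x : Icc 2 n, ξ x ω = a x}

section Combinatorics

variable {Ω : Type} {ξ : ℕ → Ω → Bool} {u : ℕ → Ω → ℕ} {root : ℕ → Ω → ℕ} {n : ℕ} {ω : Ω}

theorem root_mem_insert_one_deleted (hroot : IsForestRoot ξ u root)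
    (hω : ω ∈ parentsInRange u n) :
    ∀ m ∈ Icc 1 n, root m ω ∈ insert 1 ((Icc 2 n).filter (ξ · ω = false)) := by
  intro m
  induction m using Nat.strong_induction_on with
  | _ m ih =>
    intro hm
    obtain ⟨hm1, hmn⟩ := mem_Icc.mp hm
    rcases hm1.eq_or_lt with rfl | hm2
    · simp [hroot.1 ω]
    rw [hroot.2 ω m hm2]
    cases hξ : ξ m ω
    · simpa [hξ, hmn] using Or.inr (Nat.succ_le_of_lt hm2)
    · obtain ⟨hu1, hum⟩ := mem_Icc.mp (hω m (mem_Icc.mpr ⟨hm2, hmn⟩))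
      simpa using ih (u m ω) (by omega) (mem_Icc.mpr ⟨hu1, by omega⟩)

theorem clusterCount_one_le_one_add_card_deleted (hroot : IsForestRoot ξ u root)
    (hω : ω ∈ parentsInRange u n) {k : ℕ} (hkn : k ≤ n) :
    clusterCount root 1 k ω ≤ 1 + #((Icc 2 n).filter (ξ · ω = false)) := by
  have hsub : (Icc 1 k).filter (fun j => clusterSize root k j ω = 1) ⊆
      insert 1 ((Icc 2 n).filter (ξ · ω = false)) := by
    intro j hj
    have : 0 < clusterSize root k j ω := by rw [(mem_filter.mp hj).2]; exact one_pos
    obtain ⟨m, hm⟩ := card_pos.mp this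
    obtain ⟨hmk, rfl⟩ := mem_filter.mp hm
    exact root_mem_insert_one_deleted hroot hω m (Icc_subset_Icc_right hkn hmk)
  calc clusterCount root 1 k ω ≤ #(insert 1 ((Icc 2 n).filter (ξ · ω = false))) :=
        card_le_card hsub
    _ ≤ 1 + #((Icc 2 n).filter (ξ · ω = false)) := by
        rw [add_comm]; exact card_insert_le _ _

theorem le_card_deleted_of_le_isolated_div {k : ℕ} {c : ℝ} (hroot : IsForestRoot ξ u root)
    (hω : ω ∈ parentsInRange u n) (hn : 2 ≤ n) (hc : 0 ≤ c) (hk : n / 2 ≤ k) (hkn : k ≤ n)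
    (hI : c ≤ (clusterCount root 1 k ω : ℝ) / k) :
    c * ((n / 2 : ℕ) : ℝ) - 1 ≤ #{x : Icc 2 n | ξ x ω = false} := by
  have hk0 : (0 : ℝ) < k := by exact_mod_cast (by omega : 0 < k)
  have hcard : #{x : Icc 2 n | ξ x ω = false} = #((Icc 2 n).filter (ξ · ω = false)) := by
    rw [card_filter, card_filter, sum_coe_sort (Icc 2 n) fun j => if ξ j ω = false then 1 else 0]
  have hcount : (clusterCount root 1 k ω : ℝ) ≤ 1 + #((Icc 2 n).filter (ξ · ω = false)) := by
    exact_mod_cast clusterCount_one_le_one_add_card_deleted hroot hω hkn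
  calc c * ((n / 2 : ℕ) : ℝ) - 1 ≤ c * k - 1 := by gcongr
    _ ≤ clusterCount root 1 k ω - 1 := by rw [le_div_iff₀ hk0] at hI; linarith
    _ ≤ #{x : Icc 2 n | ξ x ω = false} := by rw [hcard]; linarith

end Combinatorics

theorem sum_prod_bool_eq_pow {ι R : Type*} [Fintype ι] [DecidableEq ι] [CommSemiring R]
    (f : Bool → R) : ∑ a : ι → Bool, ∏ x, f (a x) = (f true + f false) ^ Fintype.card ι := by
  rw [← Fintype.prod_sum fun _ => f, prod_const, Fintype.sum_bool, card_univ]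

theorem sum_Icc_uniform_eq_one {k : ℕ} (hk : 2 ≤ k) :
    ∑ j ∈ Icc 1 (k - 1), (if 1 ≤ j ∧ j ≤ k - 1 then 1 / ((k : ℝ) - 1) else 0) = 1 := by
  have hk' : (1 : ℝ) < k := by exact_mod_cast hk
  rw [sum_congr rfl fun j hj => if_pos (mem_Icc.mp hj), sum_const, Nat.card_Icc, nsmul_eq_mul,
    Nat.add_sub_cancel, Nat.cast_pred (by omega)]
  field_simp [sub_ne_zero.mpr hk'.ne']

theorem sum_prod_bernoulliWeight_le_exp {ι : Type*} [Fintype ι] [DecidableEq ι] {α θ : ℝ}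
    (hα0 : 0 ≤ α) (hα1 : α ≤ 1) (hθ : 0 ≤ θ) (t : ℝ) :
    ∑ a ∈ univ.filter (fun a : ι → Bool => t ≤ #{x | a x = false}),
        ∏ x, bernoulliWeight α (a x) ≤
      exp (-(θ * t)) * (α + (1 - α) * exp θ) ^ Fintype.card ι := by
  set tilted : Bool → ℝ := fun b => if b then α else (1 - α) * exp θ
  have htilt : ∀ a : ι → Bool,
      exp (θ * #{x | a x = false}) * ∏ x, bernoulliWeight α (a x) = ∏ x, tilted (a x) := by
    intro a
    rw [mul_comm θ, exp_nat_mul, ← prod_const, prod_filter, ← prod_mul_distrib]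
    refine prod_congr rfl fun x _ => ?_
    cases a x <;> simp [tilted, bernoulliWeight, mul_comm]
  have htilted_nonneg : ∀ b, 0 ≤ tilted b := by
    intro b; cases b <;> simp [tilted] <;> positivity
  calc ∑ a ∈ univ.filter (fun a : ι → Bool => t ≤ #{x | a x = false}),
        ∏ x, bernoulliWeight α (a x)
      ≤ ∑ a ∈ univ.filter (fun a : ι → Bool => t ≤ #{x | a x = false}),
          exp (-(θ * t)) * ∏ x, tilted (a x) := by
        refine sum_le_sum fun a ha => ?_
        have hbad : θ * t ≤ θ * #{x | a x = false} :=
          mul_le_mul_of_nonneg_left (mem_filter.mp ha).2 hθ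
        have hw : 0 ≤ ∏ x, bernoulliWeight α (a x) :=
          prod_nonneg fun x _ => by cases a x <;> simp [bernoulliWeight] <;> linarith
        rw [← htilt, ← mul_assoc, ← exp_add]
        exact le_mul_of_one_le_left hw (one_le_exp (by linarith))
    _ ≤ ∑ a : ι → Bool, exp (-(θ * t)) * ∏ x, tilted (a x) :=
        sum_le_sum_of_subset_of_nonneg (filter_subset _ _) fun a _ _ =>
          mul_nonneg (exp_nonneg _) (prod_nonneg fun x _ => htilted_nonneg _)
    _ = exp (-(θ * t)) * (α + (1 - α) * exp θ) ^ Fintype.card ι := by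
        rw [← mul_sum, sum_prod_bool_eq_pow]
        rfl

theorem exp_half_le : exp (1 / 2) ≤ 5 / 3 := by
  have hsq : exp (1 / 2) * exp (1 / 2) = exp 1 := by rw [← exp_add]; norm_num
  nlinarith [exp_one_lt_d9, exp_pos (1 / 2)]

theorem exp_mul_pow_le_four_mul_exp {α : ℝ} (hα0 : 0 ≤ α) (hα1 : α ≤ 1) {n : ℕ} (hn : 1 ≤ n)
    {m : ℝ} (hm : (n : ℝ) - 1 ≤ 2 * m) :
    exp (-(1 / 2 * (3 * (1 - α) * m - 1))) * (α + (1 - α) * exp (1 / 2)) ^ (n - 1) ≤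
      4 * exp (-((1 - α) * n / 12)) := by
  have hq : 0 ≤ 1 - α := by linarith
  have hbase : α + (1 - α) * exp (1 / 2) ≤ exp (2 / 3 * (1 - α)) := by
    nlinarith [exp_half_le, add_one_le_exp (2 / 3 * (1 - α))]
  have hbase0 : 0 ≤ α + (1 - α) * exp (1 / 2) := by positivity
  have hexpo : -(1 / 2 * (3 * (1 - α) * m - 1)) + ((n - 1 : ℕ) : ℝ) * (2 / 3 * (1 - α)) ≤
      1 + -((1 - α) * n / 12) := by
    push_cast [Nat.cast_sub hn]
    nlinarith [mul_nonneg hq (sub_nonneg.mpr hm)]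
  calc exp (-(1 / 2 * (3 * (1 - α) * m - 1))) * (α + (1 - α) * exp (1 / 2)) ^ (n - 1)
      ≤ exp (-(1 / 2 * (3 * (1 - α) * m - 1))) * exp (2 / 3 * (1 - α)) ^ (n - 1) := by
        gcongr
    _ ≤ exp 1 * exp (-((1 - α) * n / 12)) := by
        rw [← exp_nat_mul, ← exp_add, ← exp_add]
        exact exp_le_exp.mpr hexpo
    _ ≤ 4 * exp (-((1 - α) * n / 12)) := by
        gcongr
        linarith [exp_one_lt_d9]

section Law

variable {Ω : Type} [MeasurableSpace Ω] {P : Measure Ω} {α : ℝ} {ξ : ℕ → Ω → Bool}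
  {u : ℕ → Ω → ℕ} {n : ℕ}

theorem ForestLaw.measureReal_cylinder (hlaw : ForestLaw P α ξ u) (hn : 2 ≤ n)
    (a : Icc 2 n → Bool) (b : Icc 2 n → ℕ) :
    P.real {ω | ∀ x : Icc 2 n, ξ x ω = a x ∧ u x ω = b x} =
      ∏ x : Icc 2 n, bernoulliWeight α (a x) *
        (if 1 ≤ b x ∧ b x ≤ x - 1 then 1 / ((x : ℝ) - 1) else 0) := by
  have hval : Function.Injective (Subtype.val : Icc 2 n → ℕ) := Subtype.val_injective
  have h := hlaw.2.2 n hn (Function.extend Subtype.val a fun _ => true)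
    (Function.extend Subtype.val b fun _ => 0)
  rw [← prod_coe_sort] at h
  simp only [hval.extend_apply] at h
  have hset : {ω | ∀ x : Icc 2 n, ξ x ω = a x ∧ u x ω = b x} =
      {ω | ∀ k, 2 ≤ k → k ≤ n → ξ k ω = Function.extend Subtype.val a (fun _ => true) k ∧
        u k ω = Function.extend Subtype.val b (fun _ => 0) k} := by
    ext ω
    refine ⟨fun H k h2 hkn => ?_, fun H x => ?_⟩
    · have hk : k ∈ Icc 2 n := mem_Icc.mpr ⟨h2, hkn⟩
      rw [hval.extend_apply a _ ⟨k, hk⟩, hval.extend_apply b _ ⟨k, hk⟩]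
      exact H ⟨k, hk⟩
    · have := H x (mem_Icc.mp x.2).1 (mem_Icc.mp x.2).2
      rwa [hval.extend_apply, hval.extend_apply] at this
  rw [measureReal_def, hset, h]
  rfl

theorem ForestLaw.measureReal_retentionPattern_inter [IsFiniteMeasure P]
    (hlaw : ForestLaw P α ξ u) (hn : 2 ≤ n) (a : Icc 2 n → Bool) :
    P.real (retentionPattern ξ n a ∩ parentsInRange u n) = ∏ x, bernoulliWeight α (a x) := by
  classical
  set cylinder : (Icc 2 n → ℕ) → Set Ω :=
    fun b => {ω | ∀ x : Icc 2 n, ξ x ω = a x ∧ u x ω = b x}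
  have hunion : retentionPattern ξ n a ∩ parentsInRange u n =
      ⋃ b ∈ Fintype.piFinset fun x : Icc 2 n => Icc 1 ((x : ℕ) - 1), cylinder b := by
    ext ω
    simp only [retentionPattern, parentsInRange, cylinder, Set.mem_inter_iff, Set.mem_ofPred_eq,
      Set.mem_iUnion, Fintype.mem_piFinset, exists_prop]
    refine ⟨fun ⟨ha, hu⟩ => ⟨fun x => u x ω, fun x => ?_, fun x => ⟨ha x, rfl⟩⟩,
      fun ⟨b, hb, hab⟩ => ⟨fun x => (hab x).1, fun m hm => ?_⟩⟩
    · exact hu x x.2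
    · rw [(hab ⟨m, hm⟩).2]
      exact hb ⟨m, hm⟩
  have hdisj : (↑(Fintype.piFinset fun x : Icc 2 n => Icc 1 ((x : ℕ) - 1)) :
      Set (Icc 2 n → ℕ)).PairwiseDisjoint cylinder :=
    fun b _ b' _ hne => Set.disjoint_left.mpr fun ω hω hω' =>
      hne (funext fun x => (hω x).2.symm.trans (hω' x).2)
  have hmeas : ∀ b, MeasurableSet (cylinder b) := fun b => by
    simp only [cylinder, Set.ofPred_forall, Set.ofPred_and]
    exact .iInter fun x => (hlaw.1 _ _).inter (hlaw.2.1 _ _)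
  rw [hunion, measureReal_biUnion_finset hdisj fun b _ => hmeas b,
    sum_congr rfl fun b _ => hlaw.measureReal_cylinder hn a b,
    ← prod_univ_sum _ fun x j => bernoulliWeight α (a x) *
      (if 1 ≤ j ∧ j ≤ (x : ℕ) - 1 then 1 / ((x : ℝ) - 1) else 0)]
  refine prod_congr rfl fun x _ => ?_
  rw [← mul_sum, sum_Icc_uniform_eq_one (mem_Icc.mp x.2).1, mul_one]

theorem ForestLaw.measurableSet_parentsInRange (hlaw : ForestLaw P α ξ u) (n : ℕ) :
    MeasurableSet (parentsInRange u n) := by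
  have hu : ∀ k, Measurable (u k) := fun k => measurable_to_countable' fun j => hlaw.2.1 k j
  simp only [parentsInRange, Set.ofPred_forall]
  exact .biInter (Icc 2 n).countable_toSet fun m _ => hu m (Set.to_countable _).measurableSet

theorem ForestLaw.measure_compl_parentsInRange [IsProbabilityMeasure P]
    (hlaw : ForestLaw P α ξ u) (hn : 2 ≤ n) : P (parentsInRange u n)ᶜ = 0 := by
  classical
  have hunion : parentsInRange u n = ⋃ a ∈ (univ : Finset (Icc 2 n → Bool)),
      retentionPattern ξ n a ∩ parentsInRange u n := by
    ext ω
    simp only [Set.mem_iUnion, mem_univ, exists_true_left, Set.mem_inter_iff]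
    exact ⟨fun hω => ⟨fun x => ξ x ω, fun x => rfl, hω⟩, fun ⟨_, _, hω⟩ => hω⟩
  have hdisj : (↑(univ : Finset (Icc 2 n → Bool)) : Set _).PairwiseDisjoint
      fun a => retentionPattern ξ n a ∩ parentsInRange u n :=
    fun a _ a' _ hne => Set.disjoint_left.mpr fun ω hω hω' =>
      hne (funext fun x => (hω.1 x).symm.trans (hω'.1 x))
  have hmeas : ∀ a, MeasurableSet (retentionPattern ξ n a ∩ parentsInRange u n) := fun a => by
    refine MeasurableSet.inter ?_ (hlaw.measurableSet_parentsInRange n)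
    simp only [retentionPattern, Set.ofPred_forall]
    exact .iInter fun x => hlaw.1 _ _
  have hreal : P.real (parentsInRange u n) = 1 := by
    rw [hunion, measureReal_biUnion_finset hdisj fun a _ => hmeas a,
      sum_congr rfl fun a _ => hlaw.measureReal_retentionPattern_inter hn a,
      sum_prod_bool_eq_pow]
    simp [bernoulliWeight]
  rw [prob_compl_eq_zero_iff (hlaw.measurableSet_parentsInRange n)]
  exact (ENNReal.toReal_eq_one_iff _).mp hreal

end Law

/-- **Lemma 3.5.** For every `α ∈ [0,1)` and every `n ≥ 2`,
`ℙ( max_{⌊n/2⌋ ≤ k ≤ n} I(k)/k ≥ 3(1−α) ) ≤ 4·e^{−(1−α)n/12}`, where `I(k)` is the number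
of isolated vertices of `𝔽_k`. -/
theorem isolated_count_running_max_bound
    (α : ℝ) (hα0 : 0 ≤ α) (hα1 : α < 1)
    {Ω : Type} [MeasurableSpace Ω] (P : Measure Ω) [IsProbabilityMeasure P]
    (ξ : ℕ → Ω → Bool) (u : ℕ → Ω → ℕ) (root : ℕ → Ω → ℕ)
    (hlaw : ForestLaw P α ξ u) (hroot : IsForestRoot ξ u root) :
    ∀ n : ℕ, 2 ≤ n →
      (P {ω | ∃ k : ℕ, n / 2 ≤ k ∧ k ≤ n ∧
          3 * (1 - α) ≤ (clusterCount root 1 k ω : ℝ) / k}).toReal ≤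
        4 * Real.exp (-((1 - α) * n / 12)) := by
  intro n hn
  set T := {ω | ∃ k : ℕ, n / 2 ≤ k ∧ k ≤ n ∧
    3 * (1 - α) ≤ (clusterCount root 1 k ω : ℝ) / k}
  set t : ℝ := 3 * (1 - α) * ((n / 2 : ℕ) : ℝ) - 1
  set bad := univ.filter fun a : Icc 2 n → Bool => t ≤ #{x | a x = false}
  have hcover :
      T ∩ parentsInRange u n ⊆ ⋃ a ∈ bad, retentionPattern ξ n a ∩ parentsInRange u n := by
    rintro ω ⟨⟨k, hk, hkn, hI⟩, hω⟩
    refine Set.mem_biUnion (x := fun x : Icc 2 n => ξ x ω)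
      (mem_filter.mpr ⟨mem_univ _, ?_⟩) ⟨fun x => rfl, hω⟩
    exact le_card_deleted_of_le_isolated_div hroot hω hn (by linarith) hk hkn hI
  have hcard : Fintype.card (Icc 2 n) = n - 1 := by simp
  calc (P T).toReal = P.real (T ∩ parentsInRange u n) := by
        rw [measureReal_def, measure_inter_conull (hlaw.measure_compl_parentsInRange hn)]
    _ ≤ P.real (⋃ a ∈ bad, retentionPattern ξ n a ∩ parentsInRange u n) :=
        measureReal_mono hcover (measure_ne_top _ _)
    _ ≤ ∑ a ∈ bad, P.real (retentionPattern ξ n a ∩ parentsInRange u n) :=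
        measureReal_biUnion_finset_le _ _
    _ = ∑ a ∈ bad, ∏ x, bernoulliWeight α (a x) :=
        sum_congr rfl fun a _ => hlaw.measureReal_retentionPattern_inter hn a
    _ ≤ exp (-(1 / 2 * t)) * (α + (1 - α) * exp (1 / 2)) ^ (n - 1) := by
        rw [← hcard]
        exact sum_prod_bernoulliWeight_le_exp hα0 hα1.le (by norm_num) t
    _ ≤ 4 * exp (-((1 - α) * n / 12)) := by
        have hhalf : (n : ℝ) ≤ 2 * ((n / 2 : ℕ) : ℝ) + 1 := by
          exact_mod_cast (by omega : n ≤ 2 * (n / 2) + 1)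
        exact exp_mul_pow_le_four_mul_exp hα0 hα1.le (by omega) (by linarith)
end
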